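/- Let F be the ROBF map. If F has a fixed point μ* with all entries positive, then μ* is the unique fixed point of F, and for every initial vector μ⁰ with all entries positive, the iterates defined by μ^{t+1} = F(μ^t) converge to μ* as t → ∞. -/

import Mathlib

/-!
Since `m̄` solves `ψ(m) = 1` for a map `ψ` that is increasing in `m` and in `μ`, `m̄` is
antitone in `μ`; and because `x ↦ x / (1 + x)` is concave, scaling `μ` by `1 + δ` changes
`m̄_i` by a factor of at most `1 + (1 - m̄_i) δ`. Writing the map through its fixed point as
`F(μ) = μ* · m̄(μ*) / m̄(μ)`, it follows that `F` sends every `μ` with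
`μ* / (1 + δ) ≤ μ ≤ (1 + δ) μ*` into the same order interval with `δ` replaced by `(1 - c) δ`,
where `c = min_i m̄_i(μ*) > 0`. Hence the iterates converge to `μ*` from any positive start,
and a second positive fixed point, having a constant orbit, must equal `μ*`.
-/

open Finset Filter

lemma div_one_add_le_div_one_add {x y : ℝ} (hx : 0 ≤ x) (hxy : x ≤ y) :
    x / (1 + x) ≤ y / (1 + y) := by
  rw [div_le_div_iff₀ (by linarith) (by linarith)]
  nlinarith

lemma mul_div_one_add_mul_le {r x : ℝ} (hr : 1 ≤ r) (hx : 0 ≤ x) :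
    r * x / (1 + r * x) ≤ r * (x / (1 + x)) := by
  rw [← mul_div_assoc]
  exact div_le_div_of_nonneg_left (by positivity) (by positivity) (by nlinarith)

lemma mul_div_one_add_le {r x : ℝ} (hr₀ : 0 ≤ r) (hr₁ : r ≤ 1) (hx : 0 ≤ x) :
    r * (x / (1 + x)) ≤ r * x / (1 + r * x) := by
  rw [← mul_div_assoc]
  exact div_le_div_of_nonneg_left (by positivity) (by positivity) (by nlinarith)

section Psi

variable {ι : Type*} [Fintype ι] {s : ℝ} {a : ι → ℝ}

/-- The defining equation of `m̄` multiplied by `m`: `m̄_i(μ)` is the root of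
`psi (1 / N_t) (rowWeights σ μ i) m = 1`. -/
noncomputable def psi (s : ℝ) (a : ι → ℝ) (m : ℝ) : ℝ := s * ∑ x, a x * m / (1 + a x * m) + m

lemma psi_eq_mul (s : ℝ) (a : ι → ℝ) (m : ℝ) :
    psi s a m = m * (s * ∑ x, a x / (1 + a x * m) + 1) := by
  simp only [psi, mul_add, mul_one, mul_sum]
  congr 1
  exact sum_congr rfl fun x _ => by ring

variable (hs : 0 ≤ s) (ha : 0 ≤ a)
include hs ha

lemma sub_le_psi_sub_psi {m m' : ℝ} (hm : 0 ≤ m) (hmm' : m ≤ m') :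
    m' - m ≤ psi s a m' - psi s a m := by
  have hsum : ∑ x, a x * m / (1 + a x * m) ≤ ∑ x, a x * m' / (1 + a x * m') :=
    sum_le_sum fun x _ =>
      div_one_add_le_div_one_add (mul_nonneg (ha x) hm) (by gcongr; exact ha x)
  have := mul_le_mul_of_nonneg_left hsum hs
  simp only [psi]
  linarith

lemma psi_strictMonoOn : StrictMonoOn (psi s a) (Set.Ici 0) := fun m hm _ _ hmm' => by
  linarith [sub_le_psi_sub_psi hs ha (Set.mem_Ici.1 hm) hmm'.le]

lemma le_psi {m : ℝ} (hm : 0 ≤ m) : m ≤ psi s a m := by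
  simpa [psi] using sub_le_psi_sub_psi hs ha le_rfl hm

lemma psi_le_psi_of_le {a' : ι → ℝ} (haa' : a ≤ a') {m : ℝ} (hm : 0 ≤ m) :
    psi s a m ≤ psi s a' m := by
  have hsum : ∑ x, a x * m / (1 + a x * m) ≤ ∑ x, a' x * m / (1 + a' x * m) :=
    sum_le_sum fun x _ =>
      div_one_add_le_div_one_add (mul_nonneg (ha x) hm) (by gcongr; exact haa' x)
  simp only [psi]
  gcongr

lemma psi_smul_div_le {m δ : ℝ} (hm : 0 ≤ m) (hδ : 0 ≤ δ) (hroot : psi s a m = 1) :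
    psi s ((1 + δ) • a) (m / (1 + (1 - m) * δ)) ≤ 1 := by
  have hm₁ : m ≤ 1 := hroot ▸ le_psi hs ha hm
  set β := 1 + (1 - m) * δ
  have hβ : 0 < β := by nlinarith
  have hr : 1 ≤ (1 + δ) / β := by rw [one_le_div hβ]; nlinarith
  have hsum : s * ∑ x, a x * m / (1 + a x * m) = 1 - m := by
    unfold psi at hroot; linarith
  have hterm : ∀ x, (1 + δ) * a x * (m / β) / (1 + (1 + δ) * a x * (m / β))
      ≤ (1 + δ) / β * (a x * m / (1 + a x * m)) := fun x => by
    rw [show (1 + δ) * a x * (m / β) = (1 + δ) / β * (a x * m) by ring]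
    exact mul_div_one_add_mul_le hr (mul_nonneg (ha x) hm)
  calc psi s ((1 + δ) • a) (m / β)
      = s * ∑ x, (1 + δ) * a x * (m / β) / (1 + (1 + δ) * a x * (m / β)) + m / β := rfl
    _ ≤ s * ((1 + δ) / β * ∑ x, a x * m / (1 + a x * m)) + m / β := by
      gcongr; rw [mul_sum]; exact sum_le_sum fun x _ => hterm x
    _ = ((1 + δ) * (1 - m) + m) / β := by rw [mul_left_comm, hsum]; ring
    _ = 1 := by rw [div_eq_one_iff_eq hβ.ne']; ring

lemma one_le_psi_inv_smul_mul {m δ : ℝ} (hm : 0 ≤ m) (hδ : 0 ≤ δ) (hroot : psi s a m = 1) :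
    1 ≤ psi s ((1 + δ)⁻¹ • a) ((1 + (1 - m) * δ) * m) := by
  have hm₁ : m ≤ 1 := hroot ▸ le_psi hs ha hm
  set β := 1 + (1 - m) * δ
  have hr₀ : 0 ≤ β / (1 + δ) := by positivity
  have hr₁ : β / (1 + δ) ≤ 1 := by rw [div_le_one (by positivity)]; nlinarith
  have hsum : s * ∑ x, a x * m / (1 + a x * m) = 1 - m := by
    unfold psi at hroot; linarith
  have hterm : ∀ x, β / (1 + δ) * (a x * m / (1 + a x * m))
      ≤ (1 + δ)⁻¹ * a x * (β * m) / (1 + (1 + δ)⁻¹ * a x * (β * m)) := fun x => by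
    rw [show (1 + δ)⁻¹ * a x * (β * m) = β / (1 + δ) * (a x * m) by ring]
    exact mul_div_one_add_le hr₀ hr₁ (mul_nonneg (ha x) hm)
  -- the AM-GM inequality `(1 + δ) + (1 + δ)⁻¹ ≥ 2` in disguise
  have hamgm : 1 ≤ β / (1 + δ) * (1 - m) + β * m := by
    have : β / (1 + δ) * (1 - m) + β * m - 1 = m * (1 - m) * δ ^ 2 / (1 + δ) := by
      field_simp; ring
    have : 0 ≤ m * (1 - m) * δ ^ 2 / (1 + δ) :=
      div_nonneg (mul_nonneg (mul_nonneg hm (by linarith)) (sq_nonneg δ)) (by linarith)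
    linarith
  calc 1 ≤ β / (1 + δ) * (1 - m) + β * m := hamgm
    _ = s * (β / (1 + δ) * ∑ x, a x * m / (1 + a x * m)) + β * m := by
      rw [mul_left_comm, hsum]
    _ ≤ s * ∑ x, (1 + δ)⁻¹ * a x * (β * m) / (1 + (1 + δ)⁻¹ * a x * (β * m)) + β * m := by
      gcongr; rw [mul_sum]; exact sum_le_sum fun x _ => hterm x
    _ = psi s ((1 + δ)⁻¹ • a) (β * m) := rfl

end Psi

section WithinFactor

variable {E : Type*} [LE E] [SMul ℝ E]

/-- `x` lies in the ball of radius `log α` around `y` for Thompson's part metric. -/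
def WithinFactor (α : ℝ) (x y : E) : Prop := α⁻¹ • y ≤ x ∧ x ≤ α • y

lemma WithinFactor.iterate {T : E → E} {y : E} {q : ℝ} (hq : 0 ≤ q)
    (hT : ∀ δ, 0 ≤ δ → ∀ x, WithinFactor (1 + δ) x y → WithinFactor (1 + q * δ) (T x) y)
    {δ : ℝ} (hδ : 0 ≤ δ) {x : E} (hx : WithinFactor (1 + δ) x y) (t : ℕ) :
    WithinFactor (1 + q ^ t * δ) (T^[t] x) y := by
  induction t with
  | zero => simpa using hx
  | succ t ih =>
    rw [Function.iterate_succ_apply', pow_succ', mul_assoc]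
    exact hT _ (by positivity) _ ih

end WithinFactor

section Pi

variable {ι κ : Type*}

lemma withinFactor_pi_iff {α : ℝ} {x y : ι → κ → ℝ} :
    WithinFactor α x y ↔ ∀ i j, α⁻¹ * y i j ≤ x i j ∧ x i j ≤ α * y i j := by
  simp only [WithinFactor, Pi.le_def, Pi.smul_apply, smul_eq_mul, ← forall_and]

lemma tendsto_of_withinFactor {β : Type*} {l : Filter β} {u : β → ι → κ → ℝ} {y : ι → κ → ℝ}
    {b : β → ℝ} (hb : Tendsto b l (nhds 1)) (hu : ∀ t, WithinFactor (b t) (u t) y) :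
    Tendsto u l (nhds y) := by
  refine tendsto_pi_nhds.2 fun i => tendsto_pi_nhds.2 fun j => ?_
  have hlow : Tendsto (fun t => (b t)⁻¹ * y i j) l (nhds (y i j)) := by
    simpa using (hb.inv₀ one_ne_zero).mul_const (y i j)
  have hup : Tendsto (fun t => b t * y i j) l (nhds (y i j)) := by
    simpa using hb.mul_const (y i j)
  exact tendsto_of_tendsto_of_tendsto_of_le_of_le hlow hup
    (fun t => (withinFactor_pi_iff.1 (hu t) i j).1) (fun t => (withinFactor_pi_iff.1 (hu t) i j).2)

lemma exists_withinFactor [Finite ι] [Finite κ] {x y : ι → κ → ℝ}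
    (hx : ∀ i j, 0 < x i j) (hy : ∀ i j, 0 < y i j) : ∃ δ, 0 ≤ δ ∧ WithinFactor (1 + δ) x y := by
  obtain ⟨M, hM⟩ := Finite.exists_le fun p : ι × κ =>
    max (x p.1 p.2 / y p.1 p.2) (y p.1 p.2 / x p.1 p.2)
  refine ⟨|M|, abs_nonneg M, withinFactor_pi_iff.2 fun i j => ⟨?_, ?_⟩⟩
  · have : y i j / x i j ≤ 1 + |M| := by
      linarith [le_abs_self M, (max_le_iff.1 (hM (i, j))).2]
    rw [inv_mul_le_iff₀ (by positivity)]
    rwa [div_le_iff₀ (hx i j)] at this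
  · have : x i j / y i j ≤ 1 + |M| := by
      linarith [le_abs_self M, (max_le_iff.1 (hM (i, j))).1]
    rwa [div_le_iff₀ (hy i j)] at this

theorem tendsto_iterate_of_withinFactor_contraction [Finite ι] [Finite κ]
    {T : (ι → κ → ℝ) → ι → κ → ℝ} {y : ι → κ → ℝ} {q : ℝ} (hq₀ : 0 ≤ q) (hq₁ : q < 1)
    (hy : ∀ i j, 0 < y i j)
    (hT : ∀ δ, 0 ≤ δ → ∀ x, WithinFactor (1 + δ) x y → WithinFactor (1 + q * δ) (T x) y)
    {x : ι → κ → ℝ} (hx : ∀ i j, 0 < x i j) :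
    Tendsto (fun t => T^[t] x) atTop (nhds y) := by
  obtain ⟨δ, hδ, hxy⟩ := exists_withinFactor hx hy
  refine tendsto_of_withinFactor ?_ (WithinFactor.iterate hq₀ hT hδ hxy)
  simpa using ((tendsto_pow_atTop_nhds_zero_of_lt_one hq₀ hq₁).mul_const δ).const_add 1

end Pi

lemma Finite.exists_pos_le_one_forall_le {ι : Type*} [Finite ι] {f : ι → ℝ}
    (hf : ∀ i, 0 < f i) : ∃ c, 0 < c ∧ c ≤ 1 ∧ ∀ i, c ≤ f i := by
  obtain ⟨M, hM⟩ := Finite.exists_le fun i => (f i)⁻¹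
  refine ⟨(max M 1)⁻¹, by positivity, inv_le_one_of_one_le₀ (le_max_right _ _), fun i => ?_⟩
  rw [inv_le_comm₀ (by positivity) (hf i)]
  exact (hM i).trans (le_max_left _ _)

section Mbar

variable {ι κ : Type*} [Fintype ι] [Fintype κ]

def rowWeights (σ : ι → ι → κ → ℝ) (μ : ι → κ → ℝ) (i : ι) : ι × κ → ℝ :=
  fun p => σ i p.1 p.2 * μ p.1 p.2

variable {s : ℝ} {σ : ι → ι → κ → ℝ} {mbar : (ι → κ → ℝ) → ι → ℝ}
  (hs : 0 ≤ s) (hσ : ∀ i n k, 0 ≤ σ i n k)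
  (hmbar : ∀ μ : ι → κ → ℝ, (∀ n k, 0 ≤ μ n k) → ∀ i : ι,
    0 < mbar μ i ∧
    1 / mbar μ i = s * ∑ n, ∑ k, σ i n k * μ n k / (1 + σ i n k * μ n k * mbar μ i) + 1)

omit [Fintype ι] [Fintype κ] in
lemma rowWeights_nonneg (hσ : ∀ i n k, 0 ≤ σ i n k) {μ : ι → κ → ℝ} (hμ : 0 ≤ μ) (i : ι) :
    0 ≤ rowWeights σ μ i := fun p => mul_nonneg (hσ i p.1 p.2) (hμ p.1 p.2)

omit [Fintype ι] [Fintype κ] in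
lemma rowWeights_smul (r : ℝ) (μ : ι → κ → ℝ) (i : ι) :
    rowWeights σ (r • μ) i = r • rowWeights σ μ i := by
  ext p; simp only [rowWeights, Pi.smul_apply, smul_eq_mul]; ring

include hmbar in
lemma psi_mbar {μ : ι → κ → ℝ} (hμ : 0 ≤ μ) (i : ι) : psi s (rowWeights σ μ i) (mbar μ i) = 1 := by
  obtain ⟨hpos, heq⟩ := hmbar μ hμ i
  rw [psi_eq_mul, Fintype.sum_prod_type]
  exact heq ▸ mul_one_div_cancel hpos.ne'

include hs hσ hmbar

lemma mbar_le_one {μ : ι → κ → ℝ} (hμ : 0 ≤ μ) (i : ι) : mbar μ i ≤ 1 :=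
  psi_mbar hmbar hμ i ▸ le_psi hs (rowWeights_nonneg hσ hμ i) (hmbar μ hμ i).1.le

lemma mbar_antitone {μ μ' : ι → κ → ℝ} (hμ : 0 ≤ μ) (hμμ' : μ ≤ μ') (i : ι) :
    mbar μ' i ≤ mbar μ i := by
  have hμ' : 0 ≤ μ' := hμ.trans hμμ'
  refine ((psi_strictMonoOn hs (rowWeights_nonneg hσ hμ' i)).le_iff_le
    (hmbar μ' hμ' i).1.le (hmbar μ hμ i).1.le).1 ?_
  rw [psi_mbar hmbar hμ' i, ← psi_mbar hmbar hμ i]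
  exact psi_le_psi_of_le hs (rowWeights_nonneg hσ hμ i)
    (fun p => mul_le_mul_of_nonneg_left (hμμ' p.1 p.2) (hσ i p.1 p.2)) (hmbar μ hμ i).1.le

lemma mbar_div_le_mbar_smul {μ : ι → κ → ℝ} (hμ : 0 ≤ μ) {δ : ℝ} (hδ : 0 ≤ δ) (i : ι) :
    mbar μ i / (1 + (1 - mbar μ i) * δ) ≤ mbar ((1 + δ) • μ) i := by
  have hm := (hmbar μ hμ i).1.le
  have hm₁ := mbar_le_one hs hσ hmbar hμ i
  have hδμ : 0 ≤ (1 + δ) • μ := smul_nonneg (by positivity) hμ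
  refine ((psi_strictMonoOn hs (rowWeights_nonneg hσ hδμ i)).le_iff_le
    (div_nonneg hm (by nlinarith)) (hmbar _ hδμ i).1.le).1 ?_
  rw [psi_mbar hmbar hδμ i, rowWeights_smul]
  exact psi_smul_div_le hs (rowWeights_nonneg hσ hμ i) hm hδ (psi_mbar hmbar hμ i)

lemma mbar_inv_smul_le {μ : ι → κ → ℝ} (hμ : 0 ≤ μ) {δ : ℝ} (hδ : 0 ≤ δ) (i : ι) :
    mbar ((1 + δ)⁻¹ • μ) i ≤ (1 + (1 - mbar μ i) * δ) * mbar μ i := by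
  have hm := (hmbar μ hμ i).1.le
  have hm₁ := mbar_le_one hs hσ hmbar hμ i
  have hδμ : 0 ≤ (1 + δ)⁻¹ • μ := smul_nonneg (by positivity) hμ
  refine ((psi_strictMonoOn hs (rowWeights_nonneg hσ hδμ i)).le_iff_le
    (hmbar _ hδμ i).1.le (mul_nonneg (by nlinarith) hm)).1 ?_
  rw [psi_mbar hmbar hδμ i, rowWeights_smul]
  exact one_le_psi_inv_smul_mul hs (rowWeights_nonneg hσ hμ i) hm hδ (psi_mbar hmbar hμ i)

lemma mbar_withinFactor {μ μ' : ι → κ → ℝ} (hμ' : 0 ≤ μ') {c δ : ℝ} (hδ : 0 ≤ δ)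
    (h : WithinFactor (1 + δ) μ μ') {i : ι} (hc : c ≤ mbar μ' i) :
    WithinFactor (1 + (1 - c) * δ) (mbar μ i) (mbar μ' i) := by
  have hμ : 0 ≤ μ := (smul_nonneg (by positivity) hμ').trans h.1
  have hm' := (hmbar μ' hμ' i).1
  have hβ : 1 + (1 - mbar μ' i) * δ ≤ 1 + (1 - c) * δ := by nlinarith
  have hβ₀ : 0 < 1 + (1 - mbar μ' i) * δ := by nlinarith [mbar_le_one hs hσ hmbar hμ' i]
  constructor
  · calc (1 + (1 - c) * δ)⁻¹ • mbar μ' i ≤ mbar μ' i / (1 + (1 - mbar μ' i) * δ) := by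
          rw [smul_eq_mul, inv_mul_eq_div]; gcongr
      _ ≤ mbar ((1 + δ) • μ') i := mbar_div_le_mbar_smul hs hσ hmbar hμ' hδ i
      _ ≤ mbar μ i := mbar_antitone hs hσ hmbar hμ h.2 i
  · calc mbar μ i ≤ mbar ((1 + δ)⁻¹ • μ') i :=
          mbar_antitone hs hσ hmbar (smul_nonneg (by positivity) hμ') h.1 i
      _ ≤ (1 + (1 - mbar μ' i) * δ) * mbar μ' i := mbar_inv_smul_le hs hσ hmbar hμ' hδ i
      _ ≤ (1 + (1 - c) * δ) • mbar μ' i := by rw [smul_eq_mul]; gcongr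

end Mbar

section Robf

variable {ι κ : Type*} [Fintype ι] [Fintype κ]

noncomputable def robf (σ : ι → ι → κ → ℝ) (γ : ι → κ → ℝ) (mbar : (ι → κ → ℝ) → ι → ℝ)
    (μ : ι → κ → ℝ) : ι → κ → ℝ :=
  fun i j => γ i j / (σ i i j * mbar μ i)

omit [Fintype ι] [Fintype κ] in
lemma robf_eq_mul_div {i : ι} {j : κ} {σ : ι → ι → κ → ℝ} {γ : ι → κ → ℝ} {mbar : (ι → κ → ℝ) → ι → ℝ}
    {μ' : ι → κ → ℝ} (hfix : Function.IsFixedPt (robf σ γ mbar) μ') (hσ : σ i i j ≠ 0)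
    (hm' : mbar μ' i ≠ 0) (μ : ι → κ → ℝ) :
    robf σ γ mbar μ i j = μ' i j * (mbar μ' i / mbar μ i) := by
  have h : γ i j / (σ i i j * mbar μ' i) = μ' i j := congrFun (congrFun hfix i) j
  rw [← h, robf]
  field_simp

lemma robf_withinFactor {s : ℝ} (hs : 0 ≤ s) {σ : ι → ι → κ → ℝ} (hσ : ∀ i n k, 0 < σ i n k)
    {γ : ι → κ → ℝ} {mbar : (ι → κ → ℝ) → ι → ℝ}
    (hmbar : ∀ μ : ι → κ → ℝ, (∀ n k, 0 ≤ μ n k) → ∀ i : ι,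
      0 < mbar μ i ∧
      1 / mbar μ i = s * ∑ n, ∑ k, σ i n k * μ n k / (1 + σ i n k * μ n k * mbar μ i) + 1)
    {μ' : ι → κ → ℝ} (hμ' : ∀ i j, 0 < μ' i j) (hfix : Function.IsFixedPt (robf σ γ mbar) μ')
    {c : ℝ} (hc : ∀ i, c ≤ mbar μ' i) {δ : ℝ} (hδ : 0 ≤ δ) {μ : ι → κ → ℝ}
    (h : WithinFactor (1 + δ) μ μ') :
    WithinFactor (1 + (1 - c) * δ) (robf σ γ mbar μ) μ' := by
  have hμ'₀ : 0 ≤ μ' := fun i j => (hμ' i j).le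
  have hμ₀ : 0 ≤ μ := (smul_nonneg (by positivity) hμ'₀).trans h.1
  refine withinFactor_pi_iff.2 fun i j => ?_
  obtain ⟨hlo, hhi⟩ := mbar_withinFactor hs (fun i n k => (hσ i n k).le) hmbar hμ'₀ hδ h (hc i)
  have hm := (hmbar μ hμ₀ i).1
  simp only [smul_eq_mul] at hlo hhi
  have hβ : 0 < 1 + (1 - c) * δ := by nlinarith [(hmbar μ' hμ'₀ i).1]
  rw [inv_mul_le_iff₀ hβ] at hlo
  rw [robf_eq_mul_div hfix (hσ i i j).ne' (hmbar μ' hμ'₀ i).1.ne', mul_comm _ (μ' i j),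
    mul_comm _ (μ' i j)]
  constructor
  · exact mul_le_mul_of_nonneg_left (by rwa [le_div_iff₀ hm, inv_mul_le_iff₀ hβ]) (hμ' i j).le
  · exact mul_le_mul_of_nonneg_left (by rwa [div_le_iff₀ hm]) (hμ' i j).le

end Robf

theorem robf_fixed_point_convergence_general
    (N K Nt : ℕ)
    (σ : Fin N → Fin N → Fin K → ℝ) (hσ : ∀ i n k, 0 < σ i n k)
    (γ : Fin N → Fin K → ℝ)
    (mbar : (Fin N → Fin K → ℝ) → Fin N → ℝ)
    (hmbar : ∀ μ : Fin N → Fin K → ℝ, (∀ n k, 0 ≤ μ n k) → ∀ i : Fin N,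
      0 < mbar μ i ∧
      1 / mbar μ i =
        (1 / (Nt : ℝ)) * ∑ n, ∑ k, σ i n k * μ n k / (1 + σ i n k * μ n k * mbar μ i) + 1)
    (F : (Fin N → Fin K → ℝ) → Fin N → Fin K → ℝ)
    (hF : ∀ μ i j, F μ i j = γ i j / (σ i i j * mbar μ i))
    (μstar : Fin N → Fin K → ℝ) (hpos : ∀ i j, 0 < μstar i j)
    (hfix : F μstar = μstar) :
    (∀ μ : Fin N → Fin K → ℝ, (∀ i j, 0 ≤ μ i j) → F μ = μ → μ = μstar) ∧
    (∀ μ0 : Fin N → Fin K → ℝ, (∀ i j, 0 < μ0 i j) →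
      Filter.Tendsto (fun t : ℕ => F^[t] μ0) Filter.atTop (nhds μstar)) := by
  obtain rfl : F = robf σ γ mbar := funext fun μ => funext fun i => funext fun j => hF μ i j
  have hs : (0 : ℝ) ≤ 1 / (Nt : ℝ) := by positivity
  have hmstar i := (hmbar μstar (fun i j => (hpos i j).le) i).1
  obtain ⟨c, hc₀, hc₁, hc⟩ := Finite.exists_pos_le_one_forall_le hmstar
  have hconv (μ0 : Fin N → Fin K → ℝ) (hμ0 : ∀ i j, 0 < μ0 i j) :
      Tendsto (fun t : ℕ => (robf σ γ mbar)^[t] μ0) atTop (nhds μstar) :=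
    tendsto_iterate_of_withinFactor_contraction (q := 1 - c) (by linarith) (by linarith) hpos
      (fun _ hδ _ h => robf_withinFactor hs hσ hmbar hpos hfix hc hδ h) hμ0
  refine ⟨fun μ hμ hfixμ => ?_, hconv⟩
  have hμpos (i j) : 0 < μ i j := by
    rw [← hfixμ, robf_eq_mul_div hfix (hσ i i j).ne' (hmstar i).ne']
    exact mul_pos (hpos i j) (div_pos (hmstar i) (hmbar μ hμ i).1)
  exact tendsto_nhds_unique (by simp [Function.iterate_fixed hfixμ]) (hconv μ hμpos)

/-- A positive fixed point of the ROBF map is unique, and the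
ROBF iterations converge to it from any positive initial point. -/
theorem robf_fixed_point_convergence
    (N K Nt : ℕ)
    (σ : Fin N → Fin N → Fin K → ℝ) (hσ : ∀ i n k, 0 < σ i n k)
    (γ : Fin N → Fin K → ℝ) (hγ : ∀ i j, 0 < γ i j)
    (mbar : (Fin N → Fin K → ℝ) → Fin N → ℝ)
    (hmbar : ∀ μ : Fin N → Fin K → ℝ, (∀ n k, 0 ≤ μ n k) → ∀ i : Fin N,
      0 < mbar μ i ∧
      1 / mbar μ i =
        (1 / (Nt : ℝ)) * ∑ n, ∑ k, σ i n k * μ n k / (1 + σ i n k * μ n k * mbar μ i) + 1)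
    (F : (Fin N → Fin K → ℝ) → Fin N → Fin K → ℝ)
    (hF : ∀ μ i j, F μ i j = γ i j / (σ i i j * mbar μ i))
    (μstar : Fin N → Fin K → ℝ) (hpos : ∀ i j, 0 < μstar i j)
    (hfix : F μstar = μstar) :
    (∀ μ : Fin N → Fin K → ℝ, (∀ i j, 0 ≤ μ i j) → F μ = μ → μ = μstar) ∧
    (∀ μ0 : Fin N → Fin K → ℝ, (∀ i j, 0 < μ0 i j) →
      Filter.Tendsto (fun t : ℕ => F^[t] μ0) Filter.atTop (nhds μstar)) :=
  robf_fixed_point_convergence_general N K Nt σ hσ γ mbar hmbar F hF μstar hpos hfix
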